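/- Sub-critical remainder R₁ vanishes: under the assumptions of the sub-critical CLT ((F), (H2) with α ∈ (0,1/√2), and 𝔣 = (f_ℓ) satisfying (H2) uniformly), for any nondecreasing sequence (p_n) of positive integers with p_n < n, p_n/n → 1 and n − p_n − λ log n → ∞ for all λ > 0, the quantity R₁(n) = |𝔾_n|^{-1/2} ∑_{ℓ=0}^{p_n} 2^{p_n-ℓ} M_{𝔾_{n-p_n}}(𝒬^{p_n-ℓ} f̃_ℓ) (which equals ∑_{i∈𝔾_{n-p_n}} E[N_{n,i}(𝔣) | X_i], where N_{n,i}(𝔣) = |𝔾_n|^{-1/2} ∑_{ℓ=0}^{n-|i|} M_{i𝔾_{n-|i|-ℓ}}(f̃_ℓ)) satisfies lim_{n→∞} E[R₁(n)²] = 0. -/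

import Mathlib

/-!
Each summand `2^k 𝒬^k f̃_ℓ` is bounded by `(2α)^k g` thanks to the uniform (H2) bound, so
`R₁(n)` is `|𝔾_n|^{-1/2}` times a sum over the `2^{n-p_n}` vertices of `𝔾_{n-p_n}` of terms bounded
by `(p_n + 1) max(1, 2α)^{p_n} g(X_i)`. Cauchy–Schwarz over these vertices and the many-to-one
formula `E[M_{𝔾_q}(h)] = 2^q ⟨ν, 𝒬^q h⟩`, with `⟨ν, 𝒬^q g²⟩` bounded by (H2), give
`E[R₁(n)²] ≤ C n² (max(1, 2α)² / 2)^{p_n} 2^{n - p_n}`. This vanishes because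
`max(1, 2α)² < 2` and `p_n / n → 1`.
-/

open MeasureTheory ProbabilityTheory Filter Finset
open scoped NNReal Topology

noncomputable section

namespace BMC

variable {S : Type*} [MeasurableSpace S] {Ω : Type*} [MeasurableSpace Ω]

/-- The `n`-th generation `𝔾_n` of the binary tree, as a finset of `List Bool`. -/
def gen (n : ℕ) : Finset (List Bool) :=
  (Finset.univ : Finset (Fin n → Bool)).image List.ofFn

/-- The tree `𝕋_n` up to generation `n`. -/
def treeUpTo (n : ℕ) : Finset (List Bool) :=
  (Finset.range (n + 1)).biUnion gen

/-- The descendants `i𝔾_m` of `i` that are `m` generations below `i`. -/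
def desc (i : List Bool) (m : ℕ) : Finset (List Bool) :=
  (gen m).image fun j => i ++ j

/-- `M_A(f) = ∑_{i ∈ A} f(X_i)`. -/
def MA (X : List Bool → Ω → S) (A : Finset (List Bool)) (f : S → ℝ) (ω : Ω) : ℝ :=
  ∑ i ∈ A, f (X i ω)

/-- Complex-valued version of `M_A(f)`. -/
def MAC (X : List Bool → Ω → S) (A : Finset (List Bool)) (f : S → ℂ) (ω : Ω) : ℂ :=
  ∑ i ∈ A, f (X i ω)

/-- `𝒫(f ⊗ g)(x) = ∫ f(y) g(z) 𝒫(x, dy, dz)`. -/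
def Ptens (P : Kernel S (S × S)) (f g : S → ℝ) (x : S) : ℝ :=
  ∫ p, f p.1 * g p.2 ∂(P x)

/-- `𝒫(f ⊗_sym g)(x) = ∫ (f(y) g(z) + g(y) f(z))/2 𝒫(x, dy, dz)`. -/
def PtensSym (P : Kernel S (S × S)) (f g : S → ℝ) (x : S) : ℝ :=
  ∫ p, (f p.1 * g p.2 + g p.1 * f p.2) / 2 ∂(P x)

/-- Complex version of `𝒫(f ⊗_sym g)`. -/
def PtensSymC (P : Kernel S (S × S)) (f g : S → ℂ) (x : S) : ℂ :=
  ∫ p, (f p.1 * g p.2 + g p.1 * f p.2) / 2 ∂(P x)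

/-- The operator `𝒬 f (x) = ∫ (f(y)+f(z))/2 𝒫(x, dy, dz)`, i.e. the action of the
Markov kernel `𝒬 = (P₀ + P₁)/2` on functions. -/
def Qop (P : Kernel S (S × S)) (f : S → ℝ) (x : S) : ℝ :=
  ∫ p, (f p.1 + f p.2) / 2 ∂(P x)

/-- The iterated operator `𝒬ⁿ`. -/
def Qiter (P : Kernel S (S × S)) (n : ℕ) (f : S → ℝ) : S → ℝ := (Qop P)^[n] f

/-- Complex version of `𝒬`. -/
def QopC (P : Kernel S (S × S)) (f : S → ℂ) (x : S) : ℂ :=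
  ∫ p, (f p.1 + f p.2) / 2 ∂(P x)

/-- Complex version of `𝒬ⁿ`. -/
def QiterC (P : Kernel S (S × S)) (n : ℕ) (f : S → ℂ) : S → ℂ := (QopC P)^[n] f

/-- `⟨μ, f⟩ = ∫ f dμ`. -/
def mInt (μ : Measure S) (f : S → ℝ) : ℝ := ∫ x, f x ∂μ

/-- Complex `⟨μ, f⟩`. -/
def mIntC (μ : Measure S) (f : S → ℂ) : ℂ := ∫ x, f x ∂μ

/-- `f̃ = f - ⟨μ, f⟩`. -/
def ctr (μ : Measure S) (f : S → ℝ) (x : S) : ℝ := f x - mInt μ f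

/-- Coercion of a real function to a complex one. -/
def cf (f : S → ℝ) : S → ℂ := fun x => (f x : ℂ)

/-- The σ-field `ℋ_n = σ(X_j, j ∈ 𝕋_n)`. -/
def sigmaTree (X : List Bool → Ω → S) (n : ℕ) : MeasurableSpace Ω :=
  ⨆ j ∈ treeUpTo n, MeasurableSpace.comap (X j) inferInstance

lemma treeUpTo_mono {a b : ℕ} (h : a ≤ b) : treeUpTo a ⊆ treeUpTo b := by
  intro i hi
  simp only [treeUpTo, Finset.mem_biUnion, Finset.mem_range] at hi ⊢
  obtain ⟨r, hr, hir⟩ := hi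
  exact ⟨r, lt_of_lt_of_le hr (by omega), hir⟩

/-- The filtration `(ℋ_n = σ(X_i, i ∈ 𝕋_n))_{n ∈ ℕ}`. -/
def natFiltration (X : List Bool → Ω → S) (hX : ∀ i, Measurable (X i)) :
    Filtration ℕ (inferInstance : MeasurableSpace Ω) where
  seq n := sigmaTree X n
  mono' := by
    intro a b hab
    exact biSup_mono fun j hj => treeUpTo_mono hab hj
  le' n := by
    refine iSup₂_le fun j _ => ?_
    exact (hX j).comap_le

/-- `X = (X_i, i ∈ 𝕋)` is a bifurcating Markov chain on `(S, 𝒮)` with initial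
distribution `ν` and probability kernel `𝒫`, under the probability measure `m` on `Ω`. -/
structure IsBMC (P : Kernel S (S × S)) (ν : Measure S) (m : Measure Ω)
    (X : List Bool → Ω → S) : Prop where
  meas : ∀ i, Measurable (X i)
  init : m.map (X []) = ν
  branching : ∀ (n : ℕ) (g : List Bool → S → S × S → ℝ),
    (∀ i, Measurable fun q : S × S × S => g i q.1 q.2) →
    (∀ i, ∃ C, ∀ x p, |g i x p| ≤ C) →
    (m[fun ω => ∏ i ∈ gen n, g i (X i ω) (X (i ++ [false]) ω, X (i ++ [true]) ω)
        | sigmaTree X n]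
      =ᵐ[m] fun ω => ∏ i ∈ gen n, ∫ p, g i (X i ω) p ∂(P (X i ω)))

/-- Structural Assumption (F) on the set of functions `F`. -/
structure AssumpF (P : Kernel S (S × S)) (ν : Measure S) (F : Set (S → ℝ)) : Prop where
  meas : ∀ f ∈ F, Measurable f
  add_mem : ∀ f ∈ F, ∀ g ∈ F, f + g ∈ F
  smul_mem : ∀ (c : ℝ), ∀ f ∈ F, c • f ∈ F
  const_mem : ∀ c : ℝ, (fun _ : S => c) ∈ F
  sq_mem : ∀ f ∈ F, (fun x => f x ^ 2) ∈ F
  int_nu : ∀ f ∈ F, Integrable f ν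
  tens_int : ∀ f₀ ∈ F, ∀ f₁ ∈ F, ∀ x : S,
    Integrable (fun p : S × S => f₀ p.1 * f₁ p.2) (P x)
  tens_mem : ∀ f₀ ∈ F, ∀ f₁ ∈ F, Ptens P f₀ f₁ ∈ F

/-- Geometric ergodicity Assumption (H2) with rate `α`. -/
structure AssumpH2 (P : Kernel S (S × S)) (F : Set (S → ℝ)) (μ : Measure S) (α : ℝ) :
    Prop where
  prob : IsProbabilityMeasure μ
  int_mu : ∀ f ∈ F, Integrable f μ
  erg : ∀ f ∈ F, ∃ g ∈ F, ∀ (n : ℕ) (x : S), |Qiter P n f x - mInt μ f| ≤ α ^ n * g x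

/-- A sequence `𝔣` satisfies Assumption (H2) uniformly, with dominating function `g`. -/
def UnifH2 (P : Kernel S (S × S)) (μ : Measure S) (α : ℝ) (𝔣 : ℕ → S → ℝ) (g : S → ℝ) :
    Prop :=
  ∀ (n ℓ : ℕ) (x : S), |Qiter P n (𝔣 ℓ) x| ≤ g x ∧
    |Qiter P n (𝔣 ℓ) x - mInt μ (𝔣 ℓ)| ≤ α ^ n * g x

/-- `N_{n,∅}(𝔣) = |𝔾_n|^{-1/2} ∑_{ℓ=0}^n M_{𝔾_{n-ℓ}}(f̃_ℓ)`. -/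
def Nroot (μ : Measure S) (X : List Bool → Ω → S) (𝔣 : ℕ → S → ℝ) (n : ℕ) (ω : Ω) : ℝ :=
  (Real.sqrt (2 ^ n))⁻¹ * ∑ ℓ ∈ Finset.range (n + 1), MA X (gen (n - ℓ)) (ctr μ (𝔣 ℓ)) ω

/-- `N_{n,i}(𝔣) = |𝔾_n|^{-1/2} ∑_{ℓ=0}^{n-|i|} M_{i𝔾_{n-|i|-ℓ}}(f̃_ℓ)`. -/
def Nni (μ : Measure S) (X : List Bool → Ω → S) (𝔣 : ℕ → S → ℝ) (n : ℕ) (i : List Bool)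
    (ω : Ω) : ℝ :=
  (Real.sqrt (2 ^ n))⁻¹ *
    ∑ ℓ ∈ Finset.range (n - i.length + 1), MA X (desc i (n - i.length - ℓ)) (ctr μ (𝔣 ℓ)) ω

/-- Convergence in distribution to a centered Gaussian with variance `v`, expressed by
convergence of integrals of bounded continuous test functions. -/
def TendstoGauss (m : Measure Ω) (Y : ℕ → Ω → ℝ) (v : ℝ≥0) : Prop :=
  ∀ φ : BoundedContinuousFunction ℝ ℝ,
    Tendsto (fun n => ∫ ω, φ (Y n ω) ∂m) atTop (𝓝 (∫ x, φ x ∂(gaussianReal 0 v)))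

/-- Assumption (H3): a second spectral gap, with rate `α`, eigenvalues `(αj j)_{j ∈ J}`
of modulus `α`, projectors `R j`, and speed `β`. -/
structure AssumpH3 (P : Kernel S (S × S)) (F : Set (S → ℝ)) (μ : Measure S) (α : ℝ)
    {J : Type*} [Fintype J] [DecidableEq J] (αj : J → ℂ) (R : J → (S → ℂ) → S → ℂ) (β : ℕ → ℝ) :
    Prop where
  prob : IsProbabilityMeasure μ
  int_mu : ∀ f ∈ F, Integrable f μ
  nonempty : Nonempty J
  inj : Function.Injective αj
  abs_eq : ∀ j, Norm.norm (αj j) = α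
  Rlin : ∀ (j : J) (c : ℂ) (f g : S → ℂ),
    R j (fun x => c * f x + g x) = fun x => c * R j f x + R j g x
  Rorth : ∀ (j j' : J) (f : S → ℂ), R j (R j' f) = if j = j' then R j f else fun _ => 0
  Rne : ∀ j : J, ∃ f ∈ F, R j (cf f) ≠ fun _ => 0
  Rmeas : ∀ (j : J) (f : S → ℂ), Measurable f → Measurable (R j f)
  Reig : ∀ (j : J) (f : S → ℂ), QopC P (R j f) = fun x => αj j * R j f x
  βpos : ∀ n, 0 < β n
  βle : ∀ n, β n ≤ 1
  βanti : Antitone β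
  βlim : Tendsto β atTop (𝓝 0)
  erg : ∀ f ∈ F, ∃ g ∈ F, ∀ (n : ℕ) (x : S),
    Norm.norm (QiterC P n (cf f) x - (mInt μ f : ℂ)
      - (α : ℂ) ^ n * ∑ j, (αj j / (α : ℂ)) ^ n * R j (cf f) x) ≤ β n * α ^ n * g x

/-- `f̂ = f̃ - ∑_{j ∈ J} ℛ_j(f)`, as a complex-valued function. -/
def fhat {J : Type*} [Fintype J] (μ : Measure S) (R : J → (S → ℂ) → S → ℂ)
    (f : S → ℝ) : S → ℂ :=
  fun x => (ctr μ f x : ℂ) - ∑ j, R j (cf f) x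

/-- A sequence `𝔣` satisfies Assumption (H3) uniformly, with dominating function `g`. -/
def UnifH3 {J : Type*} [Fintype J] (P : Kernel S (S × S)) (μ : Measure S) (α : ℝ)
    (R : J → (S → ℂ) → S → ℂ) (β : ℕ → ℝ) (𝔣 : ℕ → S → ℝ) (g : S → ℝ) : Prop :=
  ∀ (n ℓ : ℕ) (x : S),
    Norm.norm (QiterC P n (cf (𝔣 ℓ)) x) ≤ g x ∧
    Norm.norm (QiterC P n (cf (ctr μ (𝔣 ℓ))) x) ≤ α ^ n * g x ∧
    Norm.norm (QiterC P n (fhat μ R (𝔣 ℓ)) x) ≤ β n * α ^ n * g x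

/-- `𝒫 f*_{k,ℓ}(x) = ∑_{j ∈ J} θ_j^{ℓ-k} 𝒫(ℛ_j(f_k) ⊗_sym ℛ̄_j(f_ℓ))(x)`, where
`ℛ̄_j(f) = conj (ℛ_j f)` for real `f`. -/
def Pfstar {J : Type*} [Fintype J] (P : Kernel S (S × S)) (α : ℝ) (αj : J → ℂ)
    (R : J → (S → ℂ) → S → ℂ) (𝔣 : ℕ → S → ℝ) (k ℓ : ℕ) (x : S) : ℂ :=
  ∑ j, (αj j / (α : ℂ)) ^ ((ℓ : ℤ) - (k : ℤ)) *
    PtensSymC P (R j (cf (𝔣 k))) (fun y => starRingEnd ℂ (R j (cf (𝔣 ℓ)) y)) x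


section Tree

lemma mem_gen {i : List Bool} {n : ℕ} : i ∈ gen n ↔ i.length = n := by
  constructor
  · rintro hi
    obtain ⟨f, -, rfl⟩ := mem_image.1 hi
    simp
  · rintro rfl
    exact mem_image.2 ⟨fun k => i.get k, mem_univ _, List.ofFn_get i⟩

lemma card_gen_le (n : ℕ) : #(gen n) ≤ 2 ^ n :=
  card_image_le.trans (by simp)

lemma gen_zero : gen 0 = {[]} := by
  ext i
  simp [mem_gen, List.length_eq_zero_iff]

lemma gen_succ (n : ℕ) :
    gen (n + 1) = (gen n).biUnion fun i => {i ++ [false], i ++ [true]} := by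
  ext i
  simp only [mem_gen, mem_biUnion, mem_insert, mem_singleton]
  constructor
  · intro hi
    have hne : i ≠ [] := by rintro rfl; simp at hi
    refine ⟨i.dropLast, by simp [hi], ?_⟩
    have hsplit := List.dropLast_append_getLast hne
    cases hlast : i.getLast hne <;> rw [hlast] at hsplit <;> simp [hsplit]
  · rintro ⟨j, hj, rfl | rfl⟩ <;> simp [hj]

lemma sum_gen_succ {M : Type*} [AddCommMonoid M] (f : List Bool → M) (n : ℕ) :
    ∑ i ∈ gen (n + 1), f i = ∑ i ∈ gen n, (f (i ++ [false]) + f (i ++ [true])) := by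
  have hdisj : Set.PairwiseDisjoint ↑(gen n)
      fun i : List Bool => ({i ++ [false], i ++ [true]} : Finset (List Bool)) := by
    intro a _ b _ hab
    refine disjoint_left.2 fun x hxa hxb => hab ?_
    simp only [mem_insert, mem_singleton] at hxa hxb
    rcases hxa with rfl | rfl <;> rcases hxb with h | h <;> exact List.append_inj_left' h rfl
  rw [gen_succ, sum_biUnion hdisj]
  exact sum_congr rfl fun i _ => sum_pair (by simp)

end Tree

section Qop

variable {P : Kernel S (S × S)}

lemma Qiter_succ (n : ℕ) (f : S → ℝ) : Qiter P (n + 1) f = Qop P (Qiter P n f) :=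
  Function.iterate_succ_apply' _ _ _

lemma measurable_Qop [IsSFiniteKernel P] {h : S → ℝ} (hh : Measurable h) :
    Measurable (Qop P h) :=
  (Measurable.stronglyMeasurable (by fun_prop) :
    StronglyMeasurable fun z : S × (S × S) => (h z.2.1 + h z.2.2) / 2)
    |>.integral_kernel_prod_right' (κ := P) |>.measurable

lemma abs_Qop_le [IsMarkovKernel P] {h : S → ℝ} {C : ℝ} (hC : ∀ x, |h x| ≤ C) (x : S) :
    |Qop P h x| ≤ C := by
  have := norm_integral_le_of_norm_le_const (μ := P x)
    (f := fun p : S × S => (h p.1 + h p.2) / 2) (C := C) <| .of_forall fun p => by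
      rw [Real.norm_eq_abs, abs_div, abs_two]
      linarith [abs_add_le (h p.1) (h p.2), hC p.1, hC p.2]
  simpa [Qop] using this

lemma Qop_nonneg {h : S → ℝ} (h0 : ∀ x, 0 ≤ h x) (x : S) : 0 ≤ Qop P h x :=
  integral_nonneg fun p => by dsimp; linarith [h0 p.1, h0 p.2]

lemma Qiter_nonneg {h : S → ℝ} (h0 : ∀ x, 0 ≤ h x) (n : ℕ) (x : S) : 0 ≤ Qiter P n h x := by
  induction n generalizing x with
  | zero => exact h0 x
  | succ n ih => rw [Qiter_succ]; exact Qop_nonneg ih x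

lemma Qop_mono {u v : S → ℝ} (hu : ∀ x, 0 ≤ u x) (huv : ∀ x, u x ≤ v x)
    (hv : ∀ x, Integrable (fun p : S × S => (v p.1 + v p.2) / 2) (P x)) (x : S) :
    Qop P u x ≤ Qop P v x :=
  integral_mono_of_nonneg (.of_forall fun p => by dsimp; linarith [hu p.1, hu p.2]) (hv x)
    (.of_forall fun p => by linarith [huv p.1, huv p.2])

variable {ν : Measure S} {F : Set (S → ℝ)}

lemma AssumpF.integrable_Qop_integrand (hF : AssumpF P ν F) {f : S → ℝ} (hf : f ∈ F) (x : S) :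
    Integrable (fun p : S × S => (f p.1 + f p.2) / 2) (P x) := by
  have h₀ := hF.tens_int f hf (fun _ => 1) (hF.const_mem 1) x
  have h₁ := hF.tens_int (fun _ => 1) (hF.const_mem 1) f hf x
  simp only [mul_one, one_mul] at h₀ h₁
  exact (h₀.add h₁).div_const 2

lemma AssumpF.Qop_mem (hF : AssumpF P ν F) {f : S → ℝ} (hf : f ∈ F) : Qop P f ∈ F := by
  have hQ : Qop P f = (2 : ℝ)⁻¹ • (Ptens P f (fun _ => 1) + Ptens P (fun _ => 1) f) := by
    funext x
    have h₀ := hF.tens_int f hf (fun _ => 1) (hF.const_mem 1) x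
    have h₁ := hF.tens_int (fun _ => 1) (hF.const_mem 1) f hf x
    simp only [mul_one, one_mul] at h₀ h₁
    simp only [Qop, Ptens, Pi.smul_apply, Pi.add_apply, smul_eq_mul, mul_one, one_mul]
    rw [integral_div, integral_add h₀ h₁]
    ring
  rw [hQ]
  exact hF.smul_mem _ _ (hF.add_mem _ (hF.tens_mem f hf _ (hF.const_mem 1)) _
    (hF.tens_mem _ (hF.const_mem 1) f hf))

lemma AssumpF.Qiter_mem (hF : AssumpF P ν F) {f : S → ℝ} (hf : f ∈ F) (n : ℕ) :
    Qiter P n f ∈ F := by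
  induction n with
  | zero => exact hf
  | succ n ih => rw [Qiter_succ]; exact hF.Qop_mem ih

lemma AssumpF.ctr_mem (hF : AssumpF P ν F) (μ : Measure S) {f : S → ℝ} (hf : f ∈ F) :
    ctr μ f ∈ F := by
  convert hF.add_mem f hf _ (hF.const_mem (-mInt μ f)) using 1
  funext x
  simp [ctr, sub_eq_add_neg]

lemma Qiter_mono (hF : AssumpF P ν F) {u v : S → ℝ} (hu : ∀ x, 0 ≤ u x)
    (huv : ∀ x, u x ≤ v x) (hv : v ∈ F) (n : ℕ) (x : S) :
    Qiter P n u x ≤ Qiter P n v x := by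
  induction n generalizing x with
  | zero => exact huv x
  | succ n ih =>
    rw [Qiter_succ, Qiter_succ]
    exact Qop_mono (Qiter_nonneg hu n) ih (hF.integrable_Qop_integrand (hF.Qiter_mem hv n)) x

lemma Qop_sub_const [IsMarkovKernel P] (hF : AssumpF P ν F) {f : S → ℝ} (hf : f ∈ F) (c : ℝ) :
    Qop P (fun x => f x - c) = fun x => Qop P f x - c := by
  funext x
  have hc : (fun p : S × S => ((f p.1 - c) + (f p.2 - c)) / 2)
      = fun p : S × S => (f p.1 + f p.2) / 2 - c := by funext p; ring
  rw [Qop, hc, integral_sub (hF.integrable_Qop_integrand hf x) (integrable_const c)]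
  simp [Qop]

lemma Qiter_ctr [IsMarkovKernel P] (hF : AssumpF P ν F) (μ : Measure S) {f : S → ℝ}
    (hf : f ∈ F) (n : ℕ) : Qiter P n (ctr μ f) = fun x => Qiter P n f x - mInt μ f := by
  induction n with
  | zero => rfl
  | succ n ih => rw [Qiter_succ, Qiter_succ, ih, Qop_sub_const hF (hF.Qiter_mem hf n)]

end Qop

section Expectation

variable {P : Kernel S (S × S)} {ν : Measure S} {m : Measure Ω} {X : List Bool → Ω → S}

lemma IsBMC.integrable_comp [IsFiniteMeasure m] (hBMC : IsBMC P ν m X) {u : S → ℝ}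
    (hu : Measurable u) {C : ℝ} (hC : ∀ x, |u x| ≤ C) (i : List Bool) :
    Integrable (fun ω => u (X i ω)) m :=
  (integrable_const C).mono' (hu.comp (hBMC.meas i)).aestronglyMeasurable
    (.of_forall fun _ => (Real.norm_eq_abs _).trans_le (hC _))

lemma IsBMC.integral_children [IsMarkovKernel P] [IsFiniteMeasure m] (hBMC : IsBMC P ν m X)
    {h : S → ℝ} (hh : Measurable h) {C : ℝ} (hC : ∀ x, |h x| ≤ C) {n : ℕ} {i : List Bool}
    (hi : i ∈ gen n) :
    ∫ ω, (h (X (i ++ [false]) ω) + h (X (i ++ [true]) ω)) ∂m = ∫ ω, 2 * Qop P h (X i ω) ∂m := by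
  classical
  -- the branching property with the test function `h ⊗ 1 + 1 ⊗ h` at `i` and `1` elsewhere
  set G : List Bool → S → S × S → ℝ :=
    fun j => if j = i then fun _ p => h p.1 + h p.2 else fun _ _ => 1 with hG
  have hG_meas : ∀ j, Measurable fun q : S × S × S => G j q.1 q.2 := by
    intro j
    by_cases hj : j = i <;> simp only [hG, hj, if_true, if_false] <;> fun_prop
  have hG_bdd : ∀ j, ∃ C', ∀ x p, |G j x p| ≤ C' := by
    intro j
    by_cases hj : j = i
    · exact ⟨C + C, fun x p => by
        simpa [hG, hj] using (abs_add_le _ _).trans (add_le_add (hC p.1) (hC p.2))⟩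
    · exact ⟨1, fun x p => by simp [hG, hj]⟩
  have hm : sigmaTree X n ≤ _ := (natFiltration X hBMC.meas).le n
  have : IsFiniteMeasure (m.trim hm) := isFiniteMeasure_trim hm
  have hlhs : (fun ω => ∏ j ∈ gen n, G j (X j ω) (X (j ++ [false]) ω, X (j ++ [true]) ω))
      = fun ω => h (X (i ++ [false]) ω) + h (X (i ++ [true]) ω) := by
    funext ω
    rw [prod_eq_single_of_mem i hi fun j _ hj => by simp [hG, hj]]
    simp [hG]
  have hrhs : (fun ω => ∏ j ∈ gen n, ∫ p, G j (X j ω) p ∂(P (X j ω)))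
      = fun ω => 2 * Qop P h (X i ω) := by
    funext ω
    rw [prod_eq_single_of_mem i hi fun j _ hj => by simp [hG, hj]]
    simp only [hG, if_true, Qop, integral_div]
    ring
  rw [← hlhs, ← hrhs, ← integral_condExp hm,
    integral_congr_ae (hBMC.branching n G hG_meas hG_bdd)]

/-- The many-to-one formula. -/
lemma IsBMC.integral_sum_gen [IsMarkovKernel P] [IsFiniteMeasure m] (hBMC : IsBMC P ν m X)
    {h : S → ℝ} (hh : Measurable h) {C : ℝ} (hC : ∀ x, |h x| ≤ C) (n : ℕ) :
    ∫ ω, ∑ i ∈ gen n, h (X i ω) ∂m = 2 ^ n * ∫ x, Qiter P n h x ∂ν := by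
  induction n generalizing h C with
  | zero =>
    simp only [gen_zero, sum_singleton, pow_zero, one_mul, Qiter, Function.iterate_zero, id_eq]
    rw [← hBMC.init, integral_map (hBMC.meas []).aemeasurable hh.aestronglyMeasurable]
  | succ n ih =>
    have hQ := hBMC.integrable_comp (measurable_Qop (P := P) hh) (abs_Qop_le hC)
    calc ∫ ω, ∑ i ∈ gen (n + 1), h (X i ω) ∂m
        = ∑ i ∈ gen n, ∫ ω, (h (X (i ++ [false]) ω) + h (X (i ++ [true]) ω)) ∂m := by
          simp_rw [sum_gen_succ]
          exact integral_finsetSum _ fun i _ =>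
            (hBMC.integrable_comp hh hC _).add (hBMC.integrable_comp hh hC _)
      _ = ∑ i ∈ gen n, ∫ ω, 2 * Qop P h (X i ω) ∂m :=
          sum_congr rfl fun i hi => hBMC.integral_children hh hC hi
      _ = 2 * ∫ ω, ∑ i ∈ gen n, Qop P h (X i ω) ∂m := by
          rw [integral_finsetSum _ fun i _ => hQ i, mul_sum]
          exact sum_congr rfl fun i _ => integral_const_mul 2 _
      _ = 2 ^ (n + 1) * ∫ x, Qiter P (n + 1) h x ∂ν := by
          rw [ih (measurable_Qop hh) (abs_Qop_le hC), Qiter, Qiter, Function.iterate_succ_apply]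
          ring

lemma IsBMC.integral_sum_gen_le [IsMarkovKernel P] [IsFiniteMeasure m] (hBMC : IsBMC P ν m X)
    {F : Set (S → ℝ)} (hF : AssumpF P ν F) {u h : S → ℝ} (hu : Measurable u) {C : ℝ}
    (hC : ∀ x, |u x| ≤ C) (hu0 : ∀ x, 0 ≤ u x) (huh : ∀ x, u x ≤ h x) (hh : h ∈ F) (n : ℕ) :
    ∫ ω, ∑ i ∈ gen n, u (X i ω) ∂m ≤ 2 ^ n * ∫ x, Qiter P n h x ∂ν := by
  rw [hBMC.integral_sum_gen hu hC]
  exact mul_le_mul_of_nonneg_left (integral_mono_of_nonneg (.of_forall (Qiter_nonneg hu0 n))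
    (hF.int_nu _ (hF.Qiter_mem hh n)) (.of_forall (Qiter_mono hF hu0 huh hh n))) (by positivity)

lemma IsBMC.lintegral_sum_gen_le [IsMarkovKernel P] [IsFiniteMeasure m] (hBMC : IsBMC P ν m X)
    {F : Set (S → ℝ)} (hF : AssumpF P ν F) {h : S → ℝ} (hh : h ∈ F) (h0 : ∀ x, 0 ≤ h x)
    (n : ℕ) :
    ∫⁻ ω, ENNReal.ofReal (∑ i ∈ gen n, h (X i ω)) ∂m
      ≤ ENNReal.ofReal (2 ^ n * ∫ x, Qiter P n h x ∂ν) := by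
  -- monotone convergence along the bounded truncations `min h k`
  set hk : ℕ → S → ℝ := fun k x => min (h x) k
  have hk_meas : ∀ k, Measurable (hk k) := fun k => (hF.meas h hh).min measurable_const
  have hk_bdd : ∀ k x, |hk k x| ≤ k := fun k x =>
    abs_le.2 ⟨by linarith [le_min (h0 x) (Nat.cast_nonneg (α := ℝ) k)], min_le_right _ _⟩
  have hk_nonneg : ∀ k x, 0 ≤ hk k x := fun k x => le_min (h0 x) (Nat.cast_nonneg k)
  have hsum_mono : ∀ ω, Monotone fun k => ENNReal.ofReal (∑ i ∈ gen n, hk k (X i ω)) :=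
    fun ω k k' hkk' => ENNReal.ofReal_le_ofReal <|
      sum_le_sum fun i _ => min_le_min le_rfl (Nat.cast_le.2 hkk')
  have hsup : ∀ ω, ⨆ k, ENNReal.ofReal (∑ i ∈ gen n, hk k (X i ω))
      = ENNReal.ofReal (∑ i ∈ gen n, h (X i ω)) := fun ω =>
    iSup_eq_of_tendsto (hsum_mono ω) <| (ENNReal.continuous_ofReal.tendsto _).comp <|
      tendsto_finsetSum _ fun i _ => tendsto_atTop_of_eventually_const (i₀ := ⌈h (X i ω)⌉₊)
        fun k hk => min_eq_left ((Nat.le_ceil _).trans (Nat.cast_le.2 hk))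
  calc ∫⁻ ω, ENNReal.ofReal (∑ i ∈ gen n, h (X i ω)) ∂m
      = ⨆ k, ∫⁻ ω, ENNReal.ofReal (∑ i ∈ gen n, hk k (X i ω)) ∂m := by
        simp_rw [← hsup]
        exact lintegral_iSup (fun k => (Finset.measurable_sum _ fun i _ =>
          (hk_meas k).comp (hBMC.meas i)).ennreal_ofReal) fun k k' hkk' ω => hsum_mono ω hkk'
    _ ≤ ENNReal.ofReal (2 ^ n * ∫ x, Qiter P n h x ∂ν) := by
        refine iSup_le fun k => ?_
        rw [← ofReal_integral_eq_lintegral_ofReal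
          (integrable_finsetSum _ fun i _ => hBMC.integrable_comp (hk_meas k) (hk_bdd k) i)
          (.of_forall fun ω => sum_nonneg fun i _ => hk_nonneg k _)]
        exact ENNReal.ofReal_le_ofReal <| hBMC.integral_sum_gen_le hF (hk_meas k) (hk_bdd k)
          (hk_nonneg k) (fun x => min_le_left _ _) hh n

end Expectation

section Remainder

variable {P : Kernel S (S × S)} {ν : Measure S} {F : Set (S → ℝ)} {μ : Measure S} {α : ℝ}

lemma AssumpH2.exists_integral_Qiter_le [IsFiniteMeasure ν] (hH2 : AssumpH2 P F μ α)
    (hF : AssumpF P ν F) (hα0 : 0 ≤ α) (hα1 : α ≤ 1) {f : S → ℝ} (hf : f ∈ F) :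
    ∃ C, ∀ n, ∫ x, Qiter P n f x ∂ν ≤ C := by
  obtain ⟨g, hgF, hg⟩ := hH2.erg f hf
  have hg0 : ∀ x, 0 ≤ g x := fun x => by simpa using (abs_nonneg _).trans (hg 0 x)
  refine ⟨∫ x, (mInt μ f + g x) ∂ν, fun n => integral_mono (hF.int_nu _ (hF.Qiter_mem hf n))
    ((integrable_const _).add (hF.int_nu g hgF)) fun x => ?_⟩
  have hQ := (abs_le.1 (hg n x)).2
  have hαg : α ^ n * g x ≤ g x := mul_le_of_le_one_left (hg0 x) (pow_le_one₀ hα0 hα1)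
  dsimp
  linarith

variable {𝔣 : ℕ → S → ℝ} {g : S → ℝ}

lemma abs_two_pow_mul_Qiter_ctr_le [IsMarkovKernel P] (hF : AssumpF P ν F)
    (h𝔣 : ∀ ℓ, 𝔣 ℓ ∈ F) (hunif : UnifH2 P μ α 𝔣 g) (k ℓ : ℕ) (x : S) :
    |2 ^ k * Qiter P k (ctr μ (𝔣 ℓ)) x| ≤ (2 * α) ^ k * g x := by
  rw [Qiter_ctr hF μ (h𝔣 ℓ), abs_mul, abs_of_pos (by positivity), mul_pow, mul_assoc]
  exact mul_le_mul_of_nonneg_left (hunif k ℓ x).2 (by positivity)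

lemma abs_sum_two_pow_mul_Qiter_ctr_le [IsMarkovKernel P] (hF : AssumpF P ν F)
    (h𝔣 : ∀ ℓ, 𝔣 ℓ ∈ F) (hunif : UnifH2 P μ α 𝔣 g) (hα : 0 ≤ α) (p : ℕ) (x : S) :
    |∑ ℓ ∈ range (p + 1), 2 ^ (p - ℓ) * Qiter P (p - ℓ) (ctr μ (𝔣 ℓ)) x|
      ≤ (p + 1) * max 1 (2 * α) ^ p * g x := by
  have hg0 : 0 ≤ g x := (abs_nonneg _).trans (hunif 0 0 x).1
  have hpow : ∀ ℓ, (2 * α) ^ (p - ℓ) ≤ max 1 (2 * α) ^ p := fun ℓ =>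
    (pow_le_pow_left₀ (by positivity) (le_max_right _ _) _).trans
      (pow_le_pow_right₀ (le_max_left _ _) (Nat.sub_le _ _))
  calc |∑ ℓ ∈ range (p + 1), 2 ^ (p - ℓ) * Qiter P (p - ℓ) (ctr μ (𝔣 ℓ)) x|
      ≤ ∑ ℓ ∈ range (p + 1), |2 ^ (p - ℓ) * Qiter P (p - ℓ) (ctr μ (𝔣 ℓ)) x| :=
        abs_sum_le_sum_abs _ _
    _ ≤ ∑ ℓ ∈ range (p + 1), max 1 (2 * α) ^ p * g x := sum_le_sum fun ℓ _ =>
        (abs_two_pow_mul_Qiter_ctr_le hF h𝔣 hunif _ ℓ x).trans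
          (mul_le_mul_of_nonneg_right (hpow ℓ) hg0)
    _ = (p + 1) * max 1 (2 * α) ^ p * g x := by
        rw [sum_const, card_range, nsmul_eq_mul]
        push_cast
        ring

variable {m : Measure Ω} {X : List Bool → Ω → S}

lemma IsBMC.integral_sq_MA_le [IsMarkovKernel P] [IsFiniteMeasure m] (hBMC : IsBMC P ν m X)
    (hF : AssumpF P ν F) {φ h : S → ℝ} (hφ : Measurable φ) (hh : h ∈ F) (h0 : ∀ x, 0 ≤ h x)
    {K : ℝ} (hK : 0 ≤ K) (hφh : ∀ x, φ x ^ 2 ≤ K * h x) (n : ℕ) :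
    ∫ ω, MA X (gen n) φ ω ^ 2 ∂m ≤ (2 ^ n) ^ 2 * K * ∫ x, Qiter P n h x ∂ν := by
  have hQ0 : 0 ≤ ∫ x, Qiter P n h x ∂ν := integral_nonneg (Qiter_nonneg h0 n)
  -- Cauchy–Schwarz over the at most `2^n` vertices of `gen n`
  have hpt : ∀ ω, MA X (gen n) φ ω ^ 2 ≤ 2 ^ n * K * ∑ i ∈ gen n, h (X i ω) := fun ω =>
    calc MA X (gen n) φ ω ^ 2 ≤ #(gen n) * ∑ i ∈ gen n, φ (X i ω) ^ 2 :=
          sq_sum_le_card_mul_sum_sq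
      _ ≤ 2 ^ n * ∑ i ∈ gen n, K * h (X i ω) := by
          gcongr with i
          · exact_mod_cast card_gen_le n
          · exact hφh _
      _ = 2 ^ n * K * ∑ i ∈ gen n, h (X i ω) := by rw [← mul_sum, mul_assoc]
  have hmeas : Measurable fun ω => MA X (gen n) φ ω ^ 2 :=
    (Finset.measurable_sum _ fun i _ => hφ.comp (hBMC.meas i)).pow_const 2
  rw [integral_eq_lintegral_of_nonneg_ae (.of_forall fun ω => sq_nonneg _)
    hmeas.aestronglyMeasurable]
  refine ENNReal.toReal_le_of_le_ofReal (by positivity) ?_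
  calc ∫⁻ ω, ENNReal.ofReal (MA X (gen n) φ ω ^ 2) ∂m
      ≤ ∫⁻ ω, ENNReal.ofReal (2 ^ n * K) * ENNReal.ofReal (∑ i ∈ gen n, h (X i ω)) ∂m :=
        lintegral_mono fun ω => by
          rw [← ENNReal.ofReal_mul (by positivity)]
          exact ENNReal.ofReal_le_ofReal (hpt ω)
    _ = ENNReal.ofReal (2 ^ n * K) * ∫⁻ ω, ENNReal.ofReal (∑ i ∈ gen n, h (X i ω)) ∂m :=
        lintegral_const_mul' _ _ ENNReal.ofReal_ne_top
    _ ≤ ENNReal.ofReal (2 ^ n * K) * ENNReal.ofReal (2 ^ n * ∫ x, Qiter P n h x ∂ν) := by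
        gcongr
        exact hBMC.lintegral_sum_gen_le hF hh h0 n
    _ = ENNReal.ofReal ((2 ^ n) ^ 2 * K * ∫ x, Qiter P n h x ∂ν) := by
        rw [← ENNReal.ofReal_mul (by positivity)]
        ring_nf

lemma integral_R1_sq_le [IsMarkovKernel P] [IsFiniteMeasure m] (hBMC : IsBMC P ν m X)
    (hF : AssumpF P ν F) (h𝔣 : ∀ ℓ, 𝔣 ℓ ∈ F) (hg : g ∈ F) (hunif : UnifH2 P μ α 𝔣 g)
    (hα : 0 ≤ α) {C : ℝ} (hC : ∀ n, ∫ x, Qiter P n (fun x => g x ^ 2) x ∂ν ≤ C) (n p q : ℕ) :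
    ∫ ω, ((Real.sqrt (2 ^ n))⁻¹ * ∑ ℓ ∈ range (p + 1), (2 : ℝ) ^ (p - ℓ) *
        MA X (gen q) (Qiter P (p - ℓ) (ctr μ (𝔣 ℓ))) ω) ^ 2 ∂m
      ≤ (2 ^ n)⁻¹ * ((2 ^ q) ^ 2 * ((p + 1) * max 1 (2 * α) ^ p) ^ 2 * C) := by
  set φ : S → ℝ := fun x => ∑ ℓ ∈ range (p + 1), 2 ^ (p - ℓ) * Qiter P (p - ℓ) (ctr μ (𝔣 ℓ)) x
  have hφ : Measurable φ := Finset.measurable_sum _ fun ℓ _ =>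
    (hF.meas _ (hF.Qiter_mem (hF.ctr_mem μ (h𝔣 ℓ)) _)).const_mul _
  have hφg : ∀ x, φ x ^ 2 ≤ ((p + 1) * max 1 (2 * α) ^ p) ^ 2 * g x ^ 2 := fun x => by
    rw [← mul_pow, ← sq_abs]
    exact pow_le_pow_left₀ (abs_nonneg _) (abs_sum_two_pow_mul_Qiter_ctr_le hF h𝔣 hunif hα p x) 2
  have hMA : ∀ ω, ∑ ℓ ∈ range (p + 1), (2 : ℝ) ^ (p - ℓ) *
      MA X (gen q) (Qiter P (p - ℓ) (ctr μ (𝔣 ℓ))) ω = MA X (gen q) φ ω := fun ω => by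
    simp only [φ, MA, mul_sum]
    exact sum_comm
  simp_rw [hMA, mul_pow, inv_pow, Real.sq_sqrt (by positivity : (0 : ℝ) ≤ 2 ^ n)]
  rw [integral_const_mul]
  gcongr
  calc ∫ ω, MA X (gen q) φ ω ^ 2 ∂m
      ≤ (2 ^ q) ^ 2 * ((p + 1) * max 1 (2 * α) ^ p) ^ 2 *
          ∫ x, Qiter P q (fun x => g x ^ 2) x ∂ν :=
        hBMC.integral_sq_MA_le hF hφ (hF.sq_mem g hg) (fun x => sq_nonneg _) (by positivity) hφg q
    _ ≤ (2 ^ q) ^ 2 * ((p + 1) * max 1 (2 * α) ^ p) ^ 2 * C :=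
        mul_le_mul_of_nonneg_left (hC q) (by positivity)
    _ = _ := by ring

end Remainder

lemma max_one_two_mul_sq_lt_two {α : ℝ} (hα0 : 0 ≤ α) (hα1 : α < 1 / Real.sqrt 2) :
    max 1 (2 * α) ^ 2 < 2 := by
  have hα2 : (α * Real.sqrt 2) ^ 2 < 1 := by
    have := (lt_div_iff₀ (Real.sqrt_pos.2 two_pos)).1 hα1
    nlinarith [mul_nonneg hα0 (Real.sqrt_nonneg 2)]
  rw [mul_pow, Real.sq_sqrt zero_le_two] at hα2
  rcases le_total 1 (2 * α) with h | h
  · rw [max_eq_right h]; linarith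
  · rw [max_eq_left h]; norm_num

lemma tendsto_pow_mul_pow_mul_pow_sub {p : ℕ → ℕ}
    (hp : Tendsto (fun n => (p n : ℝ) / n) atTop (𝓝 1)) {x y : ℝ} (hx0 : 0 < x) (hx1 : x < 1)
    (hy : 1 ≤ y) (k : ℕ) :
    Tendsto (fun n : ℕ => (n : ℝ) ^ k * (x ^ p n * y ^ (n - p n))) atTop (𝓝 0) := by
  have hy0 : 0 < y := zero_lt_one.trans_le hy
  have hnear : ∀ᶠ c in 𝓝 (1 : ℝ), x ^ c * y ^ (1 - c) < 1 := by
    have hcont : ContinuousAt (fun c : ℝ => x ^ c * y ^ (1 - c)) 1 := by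
      fun_prop (disch := positivity)
    exact hcont.eventually_lt continuousAt_const (by simpa using hx1)
  obtain ⟨c, hr1, hc1⟩ :=
    ((hnear.filter_mono nhdsWithin_le_nhds).and self_mem_nhdsWithin).exists (f := 𝓝[<] (1 : ℝ))
  set r := x ^ c * y ^ (1 - c)
  have hbound : ∀ᶠ n : ℕ in atTop, x ^ p n * y ^ (n - p n) ≤ r ^ n := by
    filter_upwards [hp.eventually (eventually_gt_nhds hc1), eventually_gt_atTop 0] with n hn hn0
    have hcn : c * n ≤ p n := ((lt_div_iff₀ (by positivity)).1 hn).le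
    have hsub : ((n - p n : ℕ) : ℝ) ≤ (1 - c) * n := by
      rcases le_total (p n) n with h | h
      · rw [Nat.cast_sub h]; linarith
      · rw [Nat.sub_eq_zero_of_le h, Nat.cast_zero]
        exact mul_nonneg (by linarith [show c < 1 from hc1]) (Nat.cast_nonneg n)
    calc x ^ p n * y ^ (n - p n)
        = x ^ (p n : ℝ) * y ^ ((n - p n : ℕ) : ℝ) := by simp only [Real.rpow_natCast]
      _ ≤ x ^ (c * n) * y ^ ((1 - c) * n) :=
        mul_le_mul (Real.rpow_le_rpow_of_exponent_ge hx0 hx1.le hcn)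
          (Real.rpow_le_rpow_of_exponent_le hy hsub) (by positivity) (by positivity)
      _ = r ^ n := by
        rw [Real.rpow_mul_natCast hx0.le, Real.rpow_mul_natCast hy0.le, mul_pow]
  have hr0 : 0 < r := by positivity
  refine squeeze_zero' (Eventually.of_forall fun n => by have := hx0; positivity) ?_
    (tendsto_pow_const_mul_const_pow_of_abs_lt_one k (by rwa [abs_of_pos hr0]))
  filter_upwards [hbound] with n hn
  gcongr

theorem subcritical_R1_general
    {S : Type*} [MeasurableSpace S] {Ω : Type*} [MeasurableSpace Ω]
    (P : Kernel S (S × S)) [IsMarkovKernel P]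
    (ν : Measure S) [IsProbabilityMeasure ν]
    (m : Measure Ω) [IsProbabilityMeasure m]
    (X : List Bool → Ω → S) (hBMC : IsBMC P ν m X)
    (F : Set (S → ℝ)) (hF : AssumpF P ν F)
    (μ : Measure S) (α : ℝ) (hα0 : 0 < α) (hα1 : α < 1 / Real.sqrt 2)
    (hH2 : AssumpH2 P F μ α)
    (𝔣 : ℕ → S → ℝ) (h𝔣 : ∀ ℓ, 𝔣 ℓ ∈ F)
    (g : S → ℝ) (hg : g ∈ F) (hunif : UnifH2 P μ α 𝔣 g)
    (p : ℕ → ℕ)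
    (hp_lt : ∀ᶠ n in atTop, p n < n)
    (hp_ratio : Tendsto (fun n => (p n : ℝ) / n) atTop (𝓝 1)) :
    Tendsto (fun n => ∫ ω,
        ((Real.sqrt (2 ^ n))⁻¹ *
          ∑ ℓ ∈ Finset.range (p n + 1), (2 : ℝ) ^ (p n - ℓ) *
            MA X (gen (n - p n)) (Qiter P (p n - ℓ) (ctr μ (𝔣 ℓ))) ω) ^ 2 ∂m)
      atTop (𝓝 0) := by
  set M := max 1 (2 * α)
  have hM : M ^ 2 / 2 < 1 := by linarith [max_one_two_mul_sq_lt_two hα0.le hα1]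
  have hα1' : α ≤ 1 := hα1.le.trans ((div_le_one (by positivity)).2 Real.one_lt_sqrt_two.le)
  obtain ⟨C, hC⟩ := hH2.exists_integral_Qiter_le hF hα0.le hα1' (hF.sq_mem g hg)
  have hC0 : 0 ≤ C := (integral_nonneg fun x => sq_nonneg (g x)).trans (hC 0)
  have hlim :=
    (tendsto_pow_mul_pow_mul_pow_sub hp_ratio (by positivity) hM one_le_two 2).const_mul C
  rw [mul_zero] at hlim
  refine squeeze_zero' (.of_forall fun n => integral_nonneg fun ω => sq_nonneg _) ?_ hlim
  filter_upwards [hp_lt] with n hn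
  have h2n : (2 : ℝ) ^ n = 2 ^ (n - p n) * 2 ^ p n := by
    rw [← pow_add, Nat.sub_add_cancel hn.le]
  have hpn : ((p n : ℝ) + 1) ^ 2 ≤ (n : ℝ) ^ 2 := by gcongr; exact_mod_cast hn
  calc _ ≤ (2 ^ n)⁻¹ * ((2 ^ (n - p n)) ^ 2 * ((p n + 1) * M ^ p n) ^ 2 * C) :=
        integral_R1_sq_le hBMC hF h𝔣 hg hunif hα0.le hC n (p n) (n - p n)
    _ = C * ((p n + 1) ^ 2 * ((M ^ 2 / 2) ^ p n * 2 ^ (n - p n))) := by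
        rw [h2n, div_pow]
        field_simp
        ring
    _ ≤ C * (n ^ 2 * ((M ^ 2 / 2) ^ p n * 2 ^ (n - p n))) := by gcongr

/-- **Lemma (sub-critical: the remainder `R₁` vanishes in `L²`).** -/
theorem subcritical_R1
    {S : Type*} [MeasurableSpace S] {Ω : Type*} [MeasurableSpace Ω]
    (P : Kernel S (S × S)) [IsMarkovKernel P]
    (ν : Measure S) [IsProbabilityMeasure ν]
    (m : Measure Ω) [IsProbabilityMeasure m]
    (X : List Bool → Ω → S) (hBMC : IsBMC P ν m X)
    (F : Set (S → ℝ)) (hF : AssumpF P ν F)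
    (μ : Measure S) (α : ℝ) (hα0 : 0 < α) (hα1 : α < 1 / Real.sqrt 2)
    (hH2 : AssumpH2 P F μ α)
    (𝔣 : ℕ → S → ℝ) (h𝔣 : ∀ ℓ, 𝔣 ℓ ∈ F)
    (g : S → ℝ) (hg : g ∈ F) (hunif : UnifH2 P μ α 𝔣 g)
    (p : ℕ → ℕ) (hp_mono : Monotone p) (hp_pos : ∀ n, 1 ≤ p n)
    (hp_lt : ∀ᶠ n in atTop, p n < n)
    (hp_ratio : Tendsto (fun n => (p n : ℝ) / n) atTop (𝓝 1))
    (hp_log : ∀ lam : ℝ, 0 < lam →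
      Tendsto (fun n : ℕ => (n : ℝ) - p n - lam * Real.log n) atTop atTop) :
    Tendsto (fun n => ∫ ω,
        ((Real.sqrt (2 ^ n))⁻¹ *
          ∑ ℓ ∈ Finset.range (p n + 1), (2 : ℝ) ^ (p n - ℓ) *
            MA X (gen (n - p n)) (Qiter P (p n - ℓ) (ctr μ (𝔣 ℓ))) ω) ^ 2 ∂m)
      atTop (𝓝 0) :=
  subcritical_R1_general P ν m X hBMC F hF μ α hα0 hα1 hH2 𝔣 h𝔣 g hg hunif p hp_lt hp_ratio

end BMC
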